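/- arXiv:2402.16191 — 4 statements merged into one kernel-verified Lean document; each statement's English description precedes it below -/
import Mathlib

section
/- Let (A[[ν]],⋆) be a formal deformation of A. Then for any two central elements a, b ∈ Z(A), the first-order bracket {a,b}_1 (the coefficient of ν in a⋆b − b⋆a) again belongs to the center Z(A). -/
open PowerSeries

/-- A formal deformation `(A⟦ν⟧, ⋆)` of an associative unital `R`-algebra `A`:
an `R⟦ν⟧`-bilinear, associative, unital (with unit the constant series `1`)
multiplication `⋆` on the `R⟦ν⟧`-module `A⟦ν⟧`, such that `a ⋆ b ≡ a * b (mod ν·A⟦ν⟧)`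
for all `a, b : A` (viewed as constant power series).  The `R⟦ν⟧`-module structure on
`A⟦ν⟧` is given by `c • P = (map (algebraMap R A) c) * P`. -/
structure FormalDeformation (R A : Type*) [CommRing R] [Ring A] [Algebra R A] where
  star : PowerSeries A → PowerSeries A → PowerSeries A
  add_star : ∀ P Q S, star (P + Q) S = star P S + star Q S
  star_add : ∀ P Q S, star P (Q + S) = star P Q + star P S
  smul_star : ∀ (c : PowerSeries R) (P Q : PowerSeries A),
      star (PowerSeries.map (algebraMap R A) c * P) Q
        = PowerSeries.map (algebraMap R A) c * star P Q
  star_smul : ∀ (c : PowerSeries R) (P Q : PowerSeries A),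
      star P (PowerSeries.map (algebraMap R A) c * Q)
        = PowerSeries.map (algebraMap R A) c * star P Q
  star_assoc : ∀ P Q S, star (star P Q) S = star P (star Q S)
  one_star : ∀ P, star 1 P = P
  star_one : ∀ P, star P 1 = P
  star_deform : ∀ a b : A,
      constantCoeff (R := A) (star (C (R := A) a) (C (R := A) b)) = a * b

namespace FormalDeformation

variable {R A : Type*} [CommRing R] [Ring A] [Algebra R A]

/-- `(a,b)ᵢ` : the coefficient of `νⁱ` in `a ⋆ b`, for `a b : A`. -/
noncomputable def prodCoeff (D : FormalDeformation R A) (i : ℕ) (a b : A) : A :=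
  coeff (R := A) i (D.star (C (R := A) a) (C (R := A) b))

/-- `{a,b}ᵢ` : the coefficient of `νⁱ` in `a ⋆ b − b ⋆ a`, for `a b : A`. -/
noncomputable def brkt (D : FormalDeformation R A) (i : ℕ) (a b : A) : A :=
  coeff (R := A) i (D.star (C (R := A) a) (C (R := A) b) - D.star (C (R := A) b) (C (R := A) a))

end FormalDeformation

/-- `H_ν = Z(A) + ν·A⟦ν⟧` : the power series whose constant term is central in `A`. -/
def Hnu (A : Type*) [Ring A] : Set (PowerSeries A) :=
  {P | constantCoeff (R := A) P ∈ Set.center A}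

/-!
Put `[P, Q]⋆ := P ⋆ Q - Q ⋆ P`. Since `⋆` reduces to the product of `A` modulo `ν`, the
commutator of a series whose constant term is central with any other series is divisible by `ν`.
For central `a, b` write `[a, b]⋆ = ν u`, so that `{a,b}₁` is the constant term of `u`. By the
Jacobi identity, for any `c`,
`ν [u, c]⋆ = [[a, b]⋆, c]⋆ = [a, [b, c]⋆]⋆ - [b, [a, c]⋆]⋆ = ν ([a, v]⋆ - [b, w]⋆)`
where `[b, c]⋆ = ν v` and `[a, c]⋆ = ν w`. Cancelling `ν` and taking constant terms gives
`[u₀, c] = [a, v₀] - [b, w₀] = 0`.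
-/

namespace FormalDeformation

variable {R A : Type*} [CommRing R] [Ring A] [Algebra R A] (D : FormalDeformation R A)

lemma X_mul_star (P Q : PowerSeries A) : D.star (X * P) Q = X * D.star P Q := by
  simpa only [map_X] using D.smul_star X P Q

lemma star_X_mul (P Q : PowerSeries A) : D.star P (X * Q) = X * D.star P Q := by
  simpa only [map_X] using D.star_smul X P Q

lemma sub_star (P Q S : PowerSeries A) : D.star (P - Q) S = D.star P S - D.star Q S :=
  eq_sub_of_add_eq (by rw [← D.add_star, sub_add_cancel])

lemma star_sub (P Q S : PowerSeries A) : D.star P (Q - S) = D.star P Q - D.star P S :=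
  eq_sub_of_add_eq (by rw [← D.star_add, sub_add_cancel])

lemma constantCoeff_star (P Q : PowerSeries A) :
    constantCoeff (D.star P Q) = constantCoeff P * constantCoeff Q := by
  rw [eq_X_mul_shift_add_const P, eq_X_mul_shift_add_const Q]
  simp only [D.add_star, D.star_add, D.X_mul_star, D.star_X_mul, map_add, map_mul,
    constantCoeff_X, zero_mul, zero_add, star_deform, constantCoeff_C]

def comm (P Q : PowerSeries A) : PowerSeries A :=
  D.star P Q - D.star Q P

lemma comm_jacobi (P Q S : PowerSeries A) :
    D.comm (D.comm P Q) S = D.comm P (D.comm Q S) - D.comm Q (D.comm P S) := by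
  simp only [comm, D.sub_star, D.star_sub, D.star_assoc]
  abel

lemma comm_X_mul_left (P Q : PowerSeries A) : D.comm (X * P) Q = X * D.comm P Q := by
  rw [comm, comm, D.X_mul_star, D.star_X_mul, mul_sub]

lemma comm_X_mul_right (P Q : PowerSeries A) : D.comm P (X * Q) = X * D.comm P Q := by
  rw [comm, comm, D.X_mul_star, D.star_X_mul, mul_sub]

lemma constantCoeff_comm (P Q : PowerSeries A) :
    constantCoeff (D.comm P Q)
      = constantCoeff P * constantCoeff Q - constantCoeff Q * constantCoeff P := by
  rw [comm, map_sub, D.constantCoeff_star, D.constantCoeff_star]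

lemma X_dvd_comm_of_mem_Hnu {P : PowerSeries A} (hP : P ∈ Hnu A) (Q : PowerSeries A) :
    X ∣ D.comm P Q := by
  rw [X_dvd_iff, constantCoeff_comm, hP.comm, sub_self]

lemma mem_Hnu_of_comm_eq_X_mul {P Q u : PowerSeries A} (hP : P ∈ Hnu A) (hQ : Q ∈ Hnu A)
    (hu : D.comm P Q = X * u) : u ∈ Hnu A := by
  show constantCoeff u ∈ Set.center A
  rw [Semigroup.mem_center_iff]
  intro c
  obtain ⟨v, hv⟩ := D.X_dvd_comm_of_mem_Hnu hQ (C c)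
  obtain ⟨w, hw⟩ := D.X_dvd_comm_of_mem_Hnu hP (C c)
  have hX : X * D.comm u (C c) = X * (D.comm P v - D.comm Q w) :=
    calc X * D.comm u (C c)
        = D.comm (D.comm P Q) (C c) := by rw [hu, comm_X_mul_left]
      _ = D.comm P (D.comm Q (C c)) - D.comm Q (D.comm P (C c)) := D.comm_jacobi P Q (C c)
      _ = X * (D.comm P v - D.comm Q w) := by
        rw [hv, hw, comm_X_mul_right, comm_X_mul_right, mul_sub]
  have h := congrArg constantCoeff (X_mul_cancel hX)
  rw [map_sub, constantCoeff_comm, constantCoeff_comm, constantCoeff_comm, constantCoeff_C,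
    hP.comm, hQ.comm, sub_self, sub_self, sub_self] at h
  exact (sub_eq_zero.mp h).symm

end FormalDeformation

/-- for central `a, b ∈ Z(A)`, the first-order bracket `{a,b}₁`
(the coefficient of `ν` in `a ⋆ b − b ⋆ a`) is again central. -/
theorem brkt_one_mem_center {R A : Type*} [CommRing R] [Ring A] [Algebra R A]
    (D : FormalDeformation R A) (a b : A)
    (ha : a ∈ Set.center A) (hb : b ∈ Set.center A) :
    D.brkt 1 a b ∈ Set.center A := by
  have hCa : C a ∈ Hnu A := by rwa [Hnu, Set.mem_ofPred_eq, constantCoeff_C]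
  have hCb : C b ∈ Hnu A := by rwa [Hnu, Set.mem_ofPred_eq, constantCoeff_C]
  obtain ⟨u, hu⟩ := D.X_dvd_comm_of_mem_Hnu hCa (C b)
  have hbrkt : D.brkt 1 a b = constantCoeff u := by
    rw [FormalDeformation.brkt, ← FormalDeformation.comm, hu, coeff_succ_X_mul,
      coeff_zero_eq_constantCoeff_apply]
  rw [hbrkt]
  exact D.mem_Hnu_of_comm_eq_X_mul hCa hCb hu
end

section
/- Let A be any associative unital R-algebra with center Z(A). On Π(A) := Z(A) × (A/Z(A)) the operations (a, ā1)·(b, b̄1) := (ab, class of (a b1 + a1 b)) and {(a, ā1),(b, b̄1)} := (0, class of [a1,b1]) are well defined (independent of the chosen representatives a1, b1 of the classes ā1, b̄1) and make Π(A) a commutative Poisson algebra over R: the product is associative, commutative and unital with unit (1, 0̄), the bracket is R-bilinear, alternating, satisfies the Jacobi identity, and satisfies the Leibniz identity with respect to the product. Moreover this bracket is identically zero if and only if A is 2-step nilpotent, i.e. [[A,A],A] = 0. -/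
/-! The bracket and the second component of the product are computed in `A`, through the
commutator `⁅x, y⁆ = x y - y x` of the Lie ring of `A`. Central elements are invisible to
`⁅·, ·⁆`, so the bracket only depends on classes modulo `Z(A)`; `⁅x, ·⁆` is a derivation that is
`Z(A)`-linear, which gives the Leibniz identity; Jacobi and bilinearity are those of the Lie
algebra `A`; and the bracket of `Π(A)` vanishes exactly when every commutator is central. -/

/-- The center `Z(A)` of `A`, viewed as an `R`-submodule of `A`. -/
def centerSub (R A : Type*) [CommRing R] [Ring A] [Algebra R A] : Submodule R A :=
  Subalgebra.toSubmodule (Subalgebra.center R A)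

section Commutator

attribute [local instance] LieRing.ofAssociativeRing

variable {A : Type*} [Ring A]

theorem mem_center_iff_forall_lie_eq_zero {w : A} : w ∈ Set.center A ↔ ∀ x : A, ⁅w, x⁆ = 0 := by
  simp only [Semigroup.mem_center_iff, Ring.lie_def, sub_eq_zero, eq_comm]

theorem lie_eq_zero_of_mem_center_left {z : A} (hz : z ∈ Set.center A) (x : A) : ⁅z, x⁆ = 0 :=
  mem_center_iff_forall_lie_eq_zero.mp hz x

theorem lie_eq_zero_of_mem_center_right {z : A} (hz : z ∈ Set.center A) (x : A) : ⁅x, z⁆ = 0 := by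
  rw [← lie_skew, lie_eq_zero_of_mem_center_left hz, neg_zero]

theorem lie_eq_lie_of_sub_mem_center {x x' y y' : A} (hx : x - x' ∈ Set.center A)
    (hy : y - y' ∈ Set.center A) : ⁅x, y⁆ = ⁅x', y'⁆ := by
  calc ⁅x, y⁆ = ⁅x - x' + x', y - y' + y'⁆ := by rw [sub_add_cancel, sub_add_cancel]
    _ = ⁅x', y'⁆ := by
      rw [add_lie, lie_add, lie_add, lie_eq_zero_of_mem_center_left hx,
        lie_eq_zero_of_mem_center_left hx, lie_eq_zero_of_mem_center_right hy, zero_add,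
        zero_add, zero_add]

theorem lie_central_mul {z : A} (hz : z ∈ Set.center A) (x y : A) : ⁅x, z * y⁆ = z * ⁅x, y⁆ := by
  rw [Ring.lie_def, Ring.lie_def, mul_sub, ← mul_assoc x, Semigroup.mem_center_iff.mp hz x,
    mul_assoc, mul_assoc]

theorem lie_mul_central {z : A} (hz : z ∈ Set.center A) (x y : A) : ⁅x, y * z⁆ = ⁅x, y⁆ * z := by
  rw [Ring.lie_def, Ring.lie_def, sub_mul, mul_assoc y, ← Semigroup.mem_center_iff.mp hz x,
    ← mul_assoc, ← mul_assoc]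

end Commutator

theorem mul_add_mul_sub_mem_center {A : Type*} [Ring A] {a b a1 a1' b1 b1' : A}
    (ha : a ∈ Set.center A) (hb : b ∈ Set.center A) (ha1 : a1 - a1' ∈ Set.center A)
    (hb1 : b1 - b1' ∈ Set.center A) :
    a * b1 + a1 * b - (a * b1' + a1' * b) ∈ Set.center A := by
  have hdiff : a * b1 + a1 * b - (a * b1' + a1' * b) = a * (b1 - b1') + (a1 - a1') * b := by
    noncomm_ring
  rw [hdiff]
  exact Set.add_mem_center (Set.mul_mem_center ha hb1) (Set.mul_mem_center ha1 hb)

/-- on `Π(A) = Z(A) × (A/Z(A))` the operations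
`(a, ā1)·(b, b̄1) = (ab, class (a b1 + a1 b))` and
`{(a, ā1),(b, b̄1)} = (0, class [a1,b1])` are well defined and make `Π(A)` a commutative
Poisson algebra over `R`: the product is associative, commutative and unital with unit
`(1, 0̄)`, the bracket is `R`-bilinear, alternating, satisfies the Jacobi identity and the
Leibniz identity.  Moreover the bracket vanishes identically iff `A` is 2-step nilpotent.
(All identities are stated on representatives; by well-definedness this is equivalent to
the corresponding identities on `Π(A)`.) -/
theorem trivial_deformation_poisson_algebra {R A : Type*} [CommRing R] [Ring A]
    [Algebra R A] :
    -- the product is well defined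
    (∀ a b a1 a1' b1 b1' : A, a ∈ Subalgebra.center R A → b ∈ Subalgebra.center R A →
      Submodule.Quotient.mk (p := centerSub R A) a1 = Submodule.Quotient.mk a1' →
      Submodule.Quotient.mk (p := centerSub R A) b1 = Submodule.Quotient.mk b1' →
      Submodule.Quotient.mk (p := centerSub R A) (a * b1 + a1 * b)
        = Submodule.Quotient.mk (a * b1' + a1' * b)) ∧
    -- the bracket is well defined
    (∀ a1 a1' b1 b1' : A,
      Submodule.Quotient.mk (p := centerSub R A) a1 = Submodule.Quotient.mk a1' →
      Submodule.Quotient.mk (p := centerSub R A) b1 = Submodule.Quotient.mk b1' →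
      Submodule.Quotient.mk (p := centerSub R A) (a1 * b1 - b1 * a1)
        = Submodule.Quotient.mk (a1' * b1' - b1' * a1')) ∧
    -- first components: `Z(A)` is a commutative unital subalgebra
    (∀ a b : A, a ∈ Subalgebra.center R A → b ∈ Subalgebra.center R A →
      a * b ∈ Subalgebra.center R A ∧ a * b = b * a) ∧
    ((1 : A) ∈ Subalgebra.center R A) ∧
    -- commutativity of the product (second components)
    (∀ a b a1 b1 : A, a ∈ Subalgebra.center R A → b ∈ Subalgebra.center R A →
      Submodule.Quotient.mk (p := centerSub R A) (a * b1 + a1 * b)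
        = Submodule.Quotient.mk (b * a1 + b1 * a)) ∧
    -- associativity of the product (second components)
    (∀ a b c a1 b1 c1 : A, a ∈ Subalgebra.center R A → b ∈ Subalgebra.center R A →
        c ∈ Subalgebra.center R A →
      Submodule.Quotient.mk (p := centerSub R A) ((a * b) * c1 + (a * b1 + a1 * b) * c)
        = Submodule.Quotient.mk (a * (b * c1 + b1 * c) + a1 * (b * c))) ∧
    -- unitality: `(1, 0̄)` is a unit (second components)
    (∀ b b1 : A, b ∈ Subalgebra.center R A →
      Submodule.Quotient.mk (p := centerSub R A) ((1 : A) * b1 + 0 * b)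
          = Submodule.Quotient.mk b1 ∧
      Submodule.Quotient.mk (p := centerSub R A) (b * 0 + b1 * 1)
          = Submodule.Quotient.mk b1) ∧
    -- the bracket is R-bilinear (in each argument) ...
    (∀ (r : R) (a1 b1 c1 : A),
      Submodule.Quotient.mk (p := centerSub R A)
          ((r • a1 + c1) * b1 - b1 * (r • a1 + c1))
        = r • Submodule.Quotient.mk (p := centerSub R A) (a1 * b1 - b1 * a1)
          + Submodule.Quotient.mk (p := centerSub R A) (c1 * b1 - b1 * c1)) ∧
    (∀ (r : R) (a1 b1 c1 : A),
      Submodule.Quotient.mk (p := centerSub R A)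
          (a1 * (r • b1 + c1) - (r • b1 + c1) * a1)
        = r • Submodule.Quotient.mk (p := centerSub R A) (a1 * b1 - b1 * a1)
          + Submodule.Quotient.mk (p := centerSub R A) (a1 * c1 - c1 * a1)) ∧
    -- ... and alternating
    (∀ a1 : A, Submodule.Quotient.mk (p := centerSub R A) (a1 * a1 - a1 * a1) = 0) ∧
    -- Jacobi identity
    (∀ a1 b1 c1 : A,
      Submodule.Quotient.mk (p := centerSub R A)
          ((a1 * (b1 * c1 - c1 * b1) - (b1 * c1 - c1 * b1) * a1)
            + (b1 * (c1 * a1 - a1 * c1) - (c1 * a1 - a1 * c1) * b1)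
            + (c1 * (a1 * b1 - b1 * a1) - (a1 * b1 - b1 * a1) * c1)) = 0) ∧
    -- Leibniz identity
    (∀ a b c a1 b1 c1 : A, a ∈ Subalgebra.center R A → b ∈ Subalgebra.center R A →
        c ∈ Subalgebra.center R A →
      Submodule.Quotient.mk (p := centerSub R A)
          (a1 * (b * c1 + b1 * c) - (b * c1 + b1 * c) * a1)
        = Submodule.Quotient.mk ((a1 * b1 - b1 * a1) * c + b * (a1 * c1 - c1 * a1))) ∧
    -- the bracket is identically zero iff `A` is 2-step nilpotent
    ((∀ x y : A, Submodule.Quotient.mk (p := centerSub R A) (x * y - y * x) = 0) ↔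
      (∀ x y z : A, (x * y - y * x) * z - z * (x * y - y * x) = 0)) := by
  -- Only local to the proof: as an instance for the statement, it would supply `AddCommGroup A`.
  let _ : LieRing A := LieRing.ofAssociativeRing
  simp only [← Ring.lie_def]
  refine ⟨fun a b a1 a1' b1 b1' ha hb ha1 hb1 => ?_, fun a1 a1' b1 b1' ha1 hb1 => ?_,
    fun a b ha hb => ⟨mul_mem ha hb, Subalgebra.mem_center_iff.mp hb a⟩, one_mem _,
    fun a b a1 b1 ha hb => ?_, fun a b c a1 b1 c1 _ _ _ => ?_, fun b b1 _ => by simp,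
    fun r a1 b1 c1 => ?_, fun r a1 b1 c1 => ?_, fun a1 => by simp,
    fun a1 b1 c1 => by rw [lie_jacobi, Submodule.Quotient.mk_zero],
    fun a b c a1 b1 c1 _ hb hc => ?_, ?_⟩
  · rw [Submodule.Quotient.eq] at ha1 hb1 ⊢
    exact mul_add_mul_sub_mem_center ha hb ha1 hb1
  · rw [Submodule.Quotient.eq] at ha1 hb1
    rw [lie_eq_lie_of_sub_mem_center ha1 hb1]
  · rw [Subalgebra.mem_center_iff.mp ha b1, ← Subalgebra.mem_center_iff.mp hb a1, add_comm]
  · congr 1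
    noncomm_ring
  · rw [add_lie, smul_lie, Submodule.Quotient.mk_add, Submodule.Quotient.mk_smul]
  · rw [lie_add, lie_smul r a1 b1, Submodule.Quotient.mk_add, Submodule.Quotient.mk_smul]
  · rw [lie_add, lie_central_mul hb, lie_mul_central hc, add_comm]
  · simp only [Submodule.Quotient.mk_eq_zero]
    exact forall₂_congr fun x y => mem_center_iff_forall_lie_eq_zero
end

section
/- Let (A[[ν]],⋆) be a formal deformation of A. For F0, G0 ∈ Z(A) and F1, G1 ∈ A define the derivations ∂_F(a) := {F0,a}_1 + [F1,a] and ∂_G(a) := {G0,a}_1 + [G1,a] of A, and set K := {F0,G0}_2 + {F1,G0}_1 + {F0,G1}_1 + [F1,G1] ∈ A. Then for all a ∈ A: ∂_F(∂_G(a)) − ∂_G(∂_F(a)) = {{F0,G0}_1, a}_1 + [K, a]. Moreover, if F and G are in involution, i.e. {F0,G0}_1 = 0 and K ∈ Z(A), then ∂_F and ∂_G commute, and ∂_F(G0) = 0 and ∂_G(F0) = 0 (the Hamiltonians F0 and G0 are first integrals of both derivations). -/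
open PowerSeries

/-- The Hamiltonian derivation `∂_H(a) = {H0, a}₁ + [H1, a]` associated with
`H0 ∈ Z(A)` and `H1 ∈ A`. -/
noncomputable def FormalDeformation.ham {R A : Type*} [CommRing R] [Ring A] [Algebra R A]
    (D : FormalDeformation R A) (H0 H1 a : A) : A :=
  D.brkt 1 H0 a + (H1 * a - a * H1)

/-!
Expanding the associativity of `⋆` in powers of `ν` gives, at order `ν`, that `{F, ·}₁` is a
derivation of `A` for central `F`, and at order `ν²`, for central `F` and `G`, the Jacobi-type
identity `{F, {G, a}₁}₁ - {G, {F, a}₁}₁ = {{F, G}₁, a}₁ + [{F, G}₂, a]`. Expanding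
`∂_F ∂_G a - ∂_G ∂_F a` with these two rules leaves exactly `{{F0, G0}₁, a}₁ + [K, a]`. In
involution both terms vanish, and `∂_F G0 = {F0, G0}₁ = 0` because `G0` is central.
-/

lemma PowerSeries.exists_eq_X_pow_mul_add_sum {A : Type*} [Ring A] (n : ℕ) (P : A⟦X⟧) :
    ∃ T, P = X ^ n * T + ∑ i ∈ Finset.range n, X ^ i * C (coeff i P) := by
  refine ⟨PowerSeries.mk fun i ↦ coeff (i + n) P, (eq_X_pow_mul_shift_add_trunc n P).trans ?_⟩
  rw [trunc_apply, Nat.Ico_zero_eq_range, ← Polynomial.coeToPowerSeries.ringHom_apply, map_sum]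
  simp [monomial_eq_C_mul_X_pow, (commute_X_pow _ _).eq]

namespace FormalDeformation

open Finset

variable {R A : Type*} [CommRing R] [Ring A] [Algebra R A] (D : FormalDeformation R A)

noncomputable def starAddHom : A⟦X⟧ →+ A⟦X⟧ →+ A⟦X⟧ :=
  AddMonoidHom.mk' (fun P => AddMonoidHom.mk' (D.star P) (D.star_add P))
    fun P P' => AddMonoidHom.ext (D.add_star P P')

lemma starAddHom_apply (P Q : A⟦X⟧) : D.starAddHom P Q = D.star P Q := rfl

lemma sum_star {ι : Type*} (s : Finset ι) (P : ι → A⟦X⟧) (Q : A⟦X⟧) :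
    D.star (∑ i ∈ s, P i) Q = ∑ i ∈ s, D.star (P i) Q := by
  simp only [← starAddHom_apply, map_sum, AddMonoidHom.finsetSum_apply]

lemma star_sum {ι : Type*} (s : Finset ι) (P : A⟦X⟧) (Q : ι → A⟦X⟧) :
    D.star P (∑ i ∈ s, Q i) = ∑ i ∈ s, D.star P (Q i) := by
  simp only [← starAddHom_apply, map_sum]

lemma X_pow_mul_star (k : ℕ) (P Q : A⟦X⟧) : D.star (X ^ k * P) Q = X ^ k * D.star P Q := by
  have h := D.smul_star (X ^ k) P Q
  rwa [map_pow, map_X] at h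

lemma star_X_pow_mul (k : ℕ) (P Q : A⟦X⟧) : D.star P (X ^ k * Q) = X ^ k * D.star P Q := by
  have h := D.star_smul (X ^ k) P Q
  rwa [map_pow, map_X] at h

/- `⋆` commutes with multiplication by `ν ^ k`, so the `n`-th coefficient of `P ⋆ Q` only
depends on `P` modulo `ν ^ (n + 1)`. -/
lemma coeff_star_C (n : ℕ) (P : A⟦X⟧) (c : A) :
    coeff n (D.star P (C c)) = ∑ i ∈ range (n + 1), D.prodCoeff (n - i) (coeff i P) c := by
  obtain ⟨T, hT⟩ := exists_eq_X_pow_mul_add_sum (n + 1) P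
  conv_lhs => rw [hT]
  simp only [D.add_star, sum_star, X_pow_mul_star, map_add, map_sum, coeff_X_pow_mul',
    if_neg (Nat.not_succ_le_self n), zero_add]
  refine sum_congr rfl fun i hi ↦ ?_
  rw [if_pos (Nat.lt_succ_iff.mp (mem_range.mp hi))]
  rfl

lemma coeff_C_star (n : ℕ) (c : A) (P : A⟦X⟧) :
    coeff n (D.star (C c) P) = ∑ i ∈ range (n + 1), D.prodCoeff (n - i) c (coeff i P) := by
  obtain ⟨T, hT⟩ := exists_eq_X_pow_mul_add_sum (n + 1) P
  conv_lhs => rw [hT]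
  simp only [D.star_add, star_sum, star_X_pow_mul, map_add, map_sum, coeff_X_pow_mul',
    if_neg (Nat.not_succ_le_self n), zero_add]
  refine sum_congr rfl fun i hi ↦ ?_
  rw [if_pos (Nat.lt_succ_iff.mp (mem_range.mp hi))]
  rfl

lemma prodCoeff_zero (a b : A) : D.prodCoeff 0 a b = a * b := by
  rw [prodCoeff, coeff_zero_eq_constantCoeff_apply, D.star_deform]

lemma sum_prodCoeff_assoc (n : ℕ) (a b c : A) :
    ∑ i ∈ range (n + 1), D.prodCoeff (n - i) (D.prodCoeff i a b) c
      = ∑ i ∈ range (n + 1), D.prodCoeff (n - i) a (D.prodCoeff i b c) := by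
  have h := congrArg (coeff n) (D.star_assoc (C a) (C b) (C c))
  rwa [coeff_star_C, coeff_C_star] at h

lemma prodCoeff_one_assoc (a b c : A) :
    D.prodCoeff 1 (a * b) c + D.prodCoeff 1 a b * c
      = D.prodCoeff 1 a (b * c) + a * D.prodCoeff 1 b c := by
  simpa [sum_range_succ, prodCoeff_zero] using D.sum_prodCoeff_assoc 1 a b c

lemma prodCoeff_two_assoc (a b c : A) :
    D.prodCoeff 2 (a * b) c + D.prodCoeff 1 (D.prodCoeff 1 a b) c + D.prodCoeff 2 a b * c
      = D.prodCoeff 2 a (b * c) + D.prodCoeff 1 a (D.prodCoeff 1 b c) + a * D.prodCoeff 2 b c := by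
  simpa [sum_range_succ, prodCoeff_zero] using D.sum_prodCoeff_assoc 2 a b c

lemma prodCoeff_sub_left (i : ℕ) (a b c : A) :
    D.prodCoeff i (a - b) c = D.prodCoeff i a c - D.prodCoeff i b c := by
  simp only [prodCoeff, map_sub, ← starAddHom_apply, AddMonoidHom.sub_apply]

lemma prodCoeff_sub_right (i : ℕ) (a b c : A) :
    D.prodCoeff i a (b - c) = D.prodCoeff i a b - D.prodCoeff i a c := by
  simp only [prodCoeff, map_sub, ← starAddHom_apply]

lemma brkt_eq_sub (i : ℕ) (a b : A) : D.brkt i a b = D.prodCoeff i a b - D.prodCoeff i b a :=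
  map_sub _ _ _

lemma brkt_swap (i : ℕ) (a b : A) : D.brkt i b a = -D.brkt i a b := by
  simp only [brkt_eq_sub, neg_sub]

lemma brkt_zero_left (i : ℕ) (a : A) : D.brkt i 0 a = 0 := by
  simp [brkt_eq_sub, prodCoeff, ← starAddHom_apply]

lemma brkt_add_right (i : ℕ) (a b c : A) : D.brkt i a (b + c) = D.brkt i a b + D.brkt i a c := by
  rw [brkt, brkt, brkt, ← map_add]
  congr 1
  simp only [map_add, ← starAddHom_apply, AddMonoidHom.add_apply]
  abel

lemma brkt_sub_right (i : ℕ) (a b c : A) : D.brkt i a (b - c) = D.brkt i a b - D.brkt i a c := by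
  simp only [brkt_eq_sub, prodCoeff_sub_left, prodCoeff_sub_right]
  abel

lemma brkt_one_mul_of_mem_center {F : A} (hF : F ∈ Set.center A) (b c : A) :
    D.brkt 1 F (b * c) = D.brkt 1 F b * c + b * D.brkt 1 F c := by
  have hF := Semigroup.mem_center_iff.mp hF
  have e1 := D.prodCoeff_one_assoc F b c
  have e2 := D.prodCoeff_one_assoc b F c
  have e3 := D.prodCoeff_one_assoc b c F
  rw [hF b] at e2
  rw [hF c, hF (D.prodCoeff 1 b c)] at e3
  simp only [brkt_eq_sub]
  linear_combination (norm := noncomm_ring) e2 - e1 - e3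

lemma brkt_one_commutator_of_mem_center {F : A} (hF : F ∈ Set.center A) (b c : A) :
    D.brkt 1 F (b * c - c * b)
      = (D.brkt 1 F b * c - c * D.brkt 1 F b) + (b * D.brkt 1 F c - D.brkt 1 F c * b) := by
  rw [brkt_sub_right, D.brkt_one_mul_of_mem_center hF, D.brkt_one_mul_of_mem_center hF]
  abel

lemma brkt_one_jacobi_of_mem_center {F G : A} (hF : F ∈ Set.center A) (hG : G ∈ Set.center A)
    (a : A) :
    D.brkt 1 F (D.brkt 1 G a) - D.brkt 1 G (D.brkt 1 F a)
      = D.brkt 1 (D.brkt 1 F G) a + (D.brkt 2 F G * a - a * D.brkt 2 F G) := by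
  have hF := Semigroup.mem_center_iff.mp hF
  have hG := Semigroup.mem_center_iff.mp hG
  -- order-`ν²` associativity for six orderings of `F`, `G`, `a`; commuting the central
  -- factors makes the six identities share their terms
  have e1 := D.prodCoeff_two_assoc F G a
  have e2 := D.prodCoeff_two_assoc F a G
  have e3 := D.prodCoeff_two_assoc G a F
  have e4 := D.prodCoeff_two_assoc a G F
  have e5 := D.prodCoeff_two_assoc G F a
  have e6 := D.prodCoeff_two_assoc a F G
  rw [← hG a] at e1
  rw [← hF a, hG (D.prodCoeff 2 F a)] at e2
  rw [← hG a, hF (D.prodCoeff 2 G a)] at e3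
  rw [hF G, hF (D.prodCoeff 2 a G)] at e4
  rw [hF G, ← hF a] at e5
  rw [hG (D.prodCoeff 2 a F)] at e6
  simp only [brkt_eq_sub, prodCoeff_sub_left, prodCoeff_sub_right]
  linear_combination (norm := noncomm_ring) e2 - e1 - e3 + e4 + e5 - e6

lemma ham_of_mem_center (H0 H1 : A) {b : A} (hb : b ∈ Set.center A) :
    D.ham H0 H1 b = D.brkt 1 H0 b := by
  rw [ham, Semigroup.mem_center_iff.mp hb, sub_self, add_zero]

lemma ham_zero_of_mem_center {K : A} (hK : K ∈ Set.center A) (a : A) : D.ham 0 K a = 0 := by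
  rw [ham, brkt_zero_left, Semigroup.mem_center_iff.mp hK, sub_self, add_zero]

lemma ham_ham_sub_ham_ham {F0 G0 : A} (hF0 : F0 ∈ Set.center A) (hG0 : G0 ∈ Set.center A)
    (F1 G1 a : A) :
    D.ham F0 F1 (D.ham G0 G1 a) - D.ham G0 G1 (D.ham F0 F1 a)
      = D.ham (D.brkt 1 F0 G0)
          (D.brkt 2 F0 G0 + D.brkt 1 F1 G0 + D.brkt 1 F0 G1 + (F1 * G1 - G1 * F1)) a := by
  have jacobi := D.brkt_one_jacobi_of_mem_center hF0 hG0 a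
  simp only [ham, brkt_add_right, D.brkt_one_commutator_of_mem_center hF0,
    D.brkt_one_commutator_of_mem_center hG0, D.brkt_swap 1 F1 G0]
  linear_combination (norm := noncomm_ring) jacobi

end FormalDeformation

/-- with `∂_F = {F0,·}₁ + [F1,·]`, `∂_G = {G0,·}₁ + [G1,·]` and
`K = {F0,G0}₂ + {F1,G0}₁ + {F0,G1}₁ + [F1,G1]`, one has
`[∂_F, ∂_G] = {{F0,G0}₁, ·}₁ + [K, ·]`; and if `{F0,G0}₁ = 0` and `K ∈ Z(A)`
(i.e. `F` and `G` are in involution) then `∂_F` and `∂_G` commute and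
`∂_F(G0) = 0 = ∂_G(F0)`. -/
theorem commutator_of_hamiltonian_derivations {R A : Type*} [CommRing R] [Ring A]
    [Algebra R A] (D : FormalDeformation R A) (F0 G0 F1 G1 : A)
    (hF0 : F0 ∈ Set.center A) (hG0 : G0 ∈ Set.center A) :
    (∀ a : A,
      D.ham F0 F1 (D.ham G0 G1 a) - D.ham G0 G1 (D.ham F0 F1 a)
        = D.ham (D.brkt 1 F0 G0)
            (D.brkt 2 F0 G0 + D.brkt 1 F1 G0 + D.brkt 1 F0 G1 + (F1 * G1 - G1 * F1)) a) ∧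
    (D.brkt 1 F0 G0 = 0 →
      (D.brkt 2 F0 G0 + D.brkt 1 F1 G0 + D.brkt 1 F0 G1 + (F1 * G1 - G1 * F1))
        ∈ Set.center A →
      (∀ a : A, D.ham F0 F1 (D.ham G0 G1 a) = D.ham G0 G1 (D.ham F0 F1 a)) ∧
      D.ham F0 F1 G0 = 0 ∧ D.ham G0 G1 F0 = 0) := by
  refine ⟨D.ham_ham_sub_ham_ham hF0 hG0 F1 G1, fun hFG hK ↦ ⟨fun a ↦ ?_, ?_, ?_⟩⟩
  · rw [← sub_eq_zero, D.ham_ham_sub_ham_ham hF0 hG0, hFG, D.ham_zero_of_mem_center hK]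
  · rw [D.ham_of_mem_center F0 F1 hG0, hFG]
  · rw [D.ham_of_mem_center G0 G1 hF0, D.brkt_swap, hFG, neg_zero]
end

section
/- Let N > 2 be odd, let n ≥ 2 and let ξ ∈ ℂ be a primitive n-th root of unity. Let A be the quotient of the free associative ℂ-algebra ℂ⟨x_1,…,x_N⟩ by the two-sided ideal generated by the elements x_{i+1}x_i − ξ·x_i x_{i+1} for i = 1,…,N (indices taken modulo N, so that in particular x_1 x_N − ξ·x_N x_1 is among the generators) and x_i x_j − x_j x_i for all pairs with d_N(i,j) ≠ 1, where d_N(i,j) := min(|i−j|, N−|i−j|). Then the center of A equals the unital ℂ-subalgebra generated by x_1^n, x_2^n, …, x_N^n together with the product x_1 x_2 ⋯ x_N. -/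
/-- The defining relations of the quantisation of the `N`-periodic Volterra chain,
evaluated at `ξ`: on the free associative unital `ℂ`-algebra on generators
`x_i`, `i ∈ ℤ/N`, neighbouring generators `ξ`-commute, `x_{i+1} x_i = ξ·x_i x_{i+1}`
(indices mod `N`, so this includes `x_1 x_N = ξ·x_N x_1`), and all pairs at cyclic
distance `≠ 1` commute. -/
inductive VolterraRel (N : ℕ) (ξ : ℂ) :
    FreeAlgebra ℂ (ZMod N) → FreeAlgebra ℂ (ZMod N) → Prop
  | qcomm (i : ZMod N) :
      VolterraRel N ξ (FreeAlgebra.ι ℂ (i + 1) * FreeAlgebra.ι ℂ i)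
        (ξ • (FreeAlgebra.ι ℂ i * FreeAlgebra.ι ℂ (i + 1)))
  | comm (i j : ZMod N) (h1 : j ≠ i + 1) (h2 : i ≠ j + 1) :
      VolterraRel N ξ (FreeAlgebra.ι ℂ i * FreeAlgebra.ι ℂ j)
        (FreeAlgebra.ι ℂ j * FreeAlgebra.ι ℂ i)

/-- The quantum Volterra algebra at `ξ`. -/
abbrev VolterraAlgebra (N : ℕ) (ξ : ℂ) := RingQuot (VolterraRel N ξ)

/-- The image of the generator `x_i` in the quantum Volterra algebra. -/
noncomputable def volterraGen (N : ℕ) (ξ : ℂ) (i : ZMod N) : VolterraAlgebra N ξ :=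
  RingQuot.mkAlgHom ℂ (VolterraRel N ξ) (FreeAlgebra.ι ℂ i)

/-!
The ordered monomials `x^a`, `a : ZMod N →₀ ℕ`, span the algebra, and every word in the
generators is a power of `ξ` times the monomial of its multidegree. They are linearly
independent: in the representation on `ℂ[ℕ^{ZMod N}]` in which `x_i` sends `e_a` to
`ξ ^ a (i - 1) • e_{a + δ_i}`, a word sends `e_0` to a nonzero multiple of `e_a`. Since
`x_j x^a = ξ ^ (a (j - 1) - a (j + 1)) x^a x_j`, an element is central iff every monomial in its
support has `a (j - 1) ≡ a (j + 1) mod n` for all `j`. As `N` is odd, steps of `2` reach every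
index, so all `a i` are congruent mod `n`, and then `x^a` is a multiple of
`(x_1 ⋯ x_N) ^ r * ∏ (x_i ^ n) ^ (b i)`.
-/

noncomputable section

theorem ZMod.apply_eq_apply_zero_of_periodic_two {N : ℕ} {α : Type*} (hN : Odd N)
    {f : ZMod N → α} (hf : Function.Periodic f 2) (u : ZMod N) : f u = f 0 := by
  obtain ⟨m, rfl⟩ := hN
  have h1 : Function.Periodic f 1 := by
    have hzero : ((2 * m + 1 : ℕ) : ZMod (2 * m + 1)) = 0 := ZMod.natCast_self _
    have : (m + 1) • (2 : ZMod (2 * m + 1)) = 1 := by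
      push_cast at hzero
      rw [nsmul_eq_mul]
      push_cast
      linear_combination hzero
    simpa [this] using hf.nsmul (m + 1)
  simpa using h1.nsmul u.val 0

namespace VolterraAlgebra

open Finsupp

variable {N : ℕ} {ξ : ℂ}

theorem volterraGen_add_one_mul_volterraGen (i : ZMod N) :
    volterraGen N ξ (i + 1) * volterraGen N ξ i
      = ξ • (volterraGen N ξ i * volterraGen N ξ (i + 1)) := by
  simpa [volterraGen] using RingQuot.mkAlgHom_rel ℂ (VolterraRel.qcomm (N := N) (ξ := ξ) i)

theorem volterraGen_mul_volterraGen_comm {i j : ZMod N} (h1 : j ≠ i + 1) (h2 : i ≠ j + 1) :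
    volterraGen N ξ i * volterraGen N ξ j = volterraGen N ξ j * volterraGen N ξ i := by
  simpa [volterraGen] using RingQuot.mkAlgHom_rel ℂ (VolterraRel.comm (ξ := ξ) i j h1 h2)

theorem adjoin_range_volterraGen : Algebra.adjoin ℂ (Set.range (volterraGen N ξ)) = ⊤ := by
  rw [show Set.range (volterraGen N ξ)
      = RingQuot.mkAlgHom ℂ (VolterraRel N ξ) '' Set.range (FreeAlgebra.ι ℂ) by
    rw [← Set.range_comp]; rfl, ← AlgHom.map_adjoin, FreeAlgebra.adjoin_range_ι,
    Algebra.map_top, AlgHom.range_eq_top]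
  exact RingQuot.mkAlgHom_surjective ℂ _

def twist (j : ZMod N) (a : ZMod N →₀ ℕ) : ℤ := a (j - 1) - a (j + 1)

theorem twist_add (j : ZMod N) (a b : ZMod N →₀ ℕ) :
    twist j (a + b) = twist j a + twist j b := by
  simp only [twist, Finsupp.coe_add, Pi.add_apply]; push_cast; ring

theorem twist_single (j i : ZMod N) (k : ℕ) :
    twist j (single i k) = k * twist j (single i 1) := by
  simp only [twist, single_apply]; split_ifs <;> simp

def wordDegree (l : List (ZMod N)) : ZMod N →₀ ℕ := Multiset.toFinsupp l

@[simp] theorem wordDegree_nil : wordDegree ([] : List (ZMod N)) = 0 := rfl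

@[simp] theorem wordDegree_cons (i : ZMod N) (l : List (ZMod N)) :
    wordDegree (i :: l) = single i 1 + wordDegree l := by
  rw [wordDegree, ← Multiset.cons_coe, ← Multiset.singleton_add, Multiset.toFinsupp_add,
    Multiset.toFinsupp_singleton, wordDegree]

@[simp] theorem wordDegree_append (l₁ l₂ : List (ZMod N)) :
    wordDegree (l₁ ++ l₂) = wordDegree l₁ + wordDegree l₂ := by
  simp [wordDegree, ← Multiset.coe_add, Multiset.toFinsupp_add]

theorem wordDegree_apply (l : List (ZMod N)) (u : ZMod N) : wordDegree l u = l.count u := by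
  simp [wordDegree, Multiset.toFinsupp_apply]

theorem wordDegree_replicate (k : ℕ) (i : ZMod N) :
    wordDegree (List.replicate k i) = single i k := by
  induction k with
  | zero => simp
  | succ k ih => rw [List.replicate_succ', wordDegree_append, ih]; simp

variable (N ξ) in
def volterraWord (l : List (ZMod N)) : VolterraAlgebra N ξ := (l.map (volterraGen N ξ)).prod

@[simp] theorem volterraWord_nil : volterraWord N ξ [] = 1 := rfl

@[simp] theorem volterraWord_cons (i : ZMod N) (l : List (ZMod N)) :
    volterraWord N ξ (i :: l) = volterraGen N ξ i * volterraWord N ξ l := by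
  simp [volterraWord]

@[simp] theorem volterraWord_append (l₁ l₂ : List (ZMod N)) :
    volterraWord N ξ (l₁ ++ l₂) = volterraWord N ξ l₁ * volterraWord N ξ l₂ := by
  simp [volterraWord]

theorem volterraWord_replicate (k : ℕ) (i : ZMod N) :
    volterraWord N ξ (List.replicate k i) = volterraGen N ξ i ^ k := by
  simp [volterraWord, List.map_replicate]

theorem span_range_volterraWord : Submodule.span ℂ (Set.range (volterraWord N ξ)) = ⊤ := by
  rw [eq_top_iff, ← Algebra.top_toSubmodule, ← adjoin_range_volterraGen, Algebra.adjoin_eq_span,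
    ← FreeMonoid.mrange_lift]
  refine Submodule.span_mono ?_
  rintro _ ⟨m, rfl⟩
  exact ⟨m.toList, (FreeMonoid.lift_apply _ m).symm⟩

variable (N ξ) in
def volterraMonomial (a : ZMod N →₀ ℕ) : VolterraAlgebra N ξ :=
  volterraWord N ξ (Finsupp.toMultiset a).toList

theorem wordDegree_toList_toMultiset (a : ZMod N →₀ ℕ) :
    wordDegree (Finsupp.toMultiset a).toList = a := by
  simp [wordDegree]

@[simp] theorem volterraMonomial_zero : volterraMonomial N ξ 0 = 1 := by
  simp [volterraMonomial]

variable (N) in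
def cycleWord : List (ZMod N) := (List.range N).map fun i => ((i + 1 : ℕ) : ZMod N)

theorem wordDegree_cycleWord_apply [NeZero N] (u : ZMod N) :
    wordDegree (cycleWord N) u = 1 := by
  rw [wordDegree_apply]
  refine List.count_eq_one_of_mem (List.Nodup.map_on (fun i hi j hj h => ?_) List.nodup_range) ?_
  · rw [List.mem_range] at hi hj
    push_cast at h
    simpa [ZMod.val_cast_of_lt hi, ZMod.val_cast_of_lt hj] using
      congrArg ZMod.val (add_right_cancel h)
  · exact List.mem_map.mpr ⟨(u - 1).val, List.mem_range.mpr (ZMod.val_lt _), by push_cast; simp⟩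

theorem mod_eq_of_forall_zpow_twist_eq_one (hNodd : Odd N) {n : ℕ}
    (hξ : IsPrimitiveRoot ξ n) {a : ZMod N →₀ ℕ} (ha : ∀ j, ξ ^ twist j a = 1) (u : ZMod N) :
    a u % n = a 0 % n := by
  have hper : Function.Periodic (fun u => (a u : ZMod n)) 2 := by
    intro u
    have := (hξ.zpow_eq_one_iff_dvd _).mp (ha (u + 1))
    rw [twist, ← ZMod.intCast_eq_intCast_iff_dvd_sub] at this
    simpa [add_assoc, one_add_one_eq_two] using this
  exact (ZMod.natCast_eq_natCast_iff' _ _ _).mp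
    (ZMod.apply_eq_apply_zero_of_periodic_two hNodd hper u)

variable (ξ) in
def weightedShift (i : ZMod N) : Module.End ℂ ((ZMod N →₀ ℕ) →₀ ℂ) :=
  Finsupp.lsum ℂ fun a => ξ ^ a (i - 1) • Finsupp.lsingle (a + single i 1)

theorem weightedShift_single (i : ZMod N) (a : ZMod N →₀ ℕ) (c : ℂ) :
    weightedShift ξ i (single a c) = ξ ^ a (i - 1) • single (a + single i 1) c := by
  simp [weightedShift]

theorem weightedShift_comm {i j : ZMod N} (h1 : j ≠ i + 1) (h2 : i ≠ j + 1) :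
    weightedShift ξ i * weightedShift ξ j = weightedShift ξ j * weightedShift ξ i := by
  refine Finsupp.lhom_ext fun a c => ?_
  have hj : j - 1 ≠ i := fun h => h1 (by rw [← h]; ring)
  have hi : i - 1 ≠ j := fun h => h2 (by rw [← h]; ring)
  simp only [Module.End.mul_apply, weightedShift_single, map_smul, smul_smul, coe_add,
    Pi.add_apply, single_apply, if_neg hi.symm, if_neg hj.symm, add_zero, mul_comm,
    add_right_comm]

section

variable (hN : (2 : ZMod N) ≠ 0)
include hN

theorem weightedShift_add_one_mul (i : ZMod N) :
    weightedShift ξ (i + 1) * weightedShift ξ i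
      = ξ • (weightedShift ξ i * weightedShift ξ (i + 1)) := by
  refine Finsupp.lhom_ext fun a c => ?_
  have hi : i + 1 ≠ i - 1 := fun h => hN (by linear_combination h)
  simp only [Module.End.mul_apply, LinearMap.smul_apply, weightedShift_single, map_smul,
    smul_smul, coe_add, Pi.add_apply, single_apply, if_neg hi, add_sub_cancel_right, if_pos,
    add_zero, pow_succ, add_right_comm]
  ring_nf

variable (ξ) in
def weightedShiftRep : VolterraAlgebra N ξ →ₐ[ℂ] Module.End ℂ ((ZMod N →₀ ℕ) →₀ ℂ) :=
  RingQuot.liftAlgHom ℂ ⟨FreeAlgebra.lift ℂ (weightedShift ξ), by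
    rintro _ _ (⟨i⟩ | ⟨i, j, h1, h2⟩)
    · simpa using weightedShift_add_one_mul hN i
    · simpa using weightedShift_comm h1 h2⟩

theorem weightedShiftRep_volterraGen (i : ZMod N) :
    weightedShiftRep ξ hN (volterraGen N ξ i) = weightedShift ξ i := by
  rw [weightedShiftRep, volterraGen, RingQuot.liftAlgHom_mkAlgHom_apply,
    FreeAlgebra.lift_ι_apply]

theorem weightedShiftRep_volterraWord (l : List (ZMod N)) (a : ZMod N →₀ ℕ) :
    ∃ m : ℕ, weightedShiftRep ξ hN (volterraWord N ξ l) (single a 1)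
      = ξ ^ m • single (a + wordDegree l) 1 := by
  induction l with
  | nil => exact ⟨0, by simp⟩
  | cons i l ih =>
    obtain ⟨m, hm⟩ := ih
    refine ⟨m + (a + wordDegree l) (i - 1), ?_⟩
    rw [volterraWord_cons, map_mul, Module.End.mul_apply, hm, map_smul,
      weightedShiftRep_volterraGen, weightedShift_single, smul_smul, ← pow_add, wordDegree_cons,
      add_left_comm, add_comm (single i 1)]

variable (hξ : ξ ≠ 0)
include hξ

theorem volterraGen_mul_volterraGen (i j : ZMod N) :
    volterraGen N ξ j * volterraGen N ξ i
      = ξ ^ twist j (single i 1) • (volterraGen N ξ i * volterraGen N ξ j) := by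
  by_cases h1 : j = i + 1
  · have : i + 1 + 1 ≠ i := fun h => hN (by linear_combination h)
    simp [h1, twist, this, volterraGen_add_one_mul_volterraGen]
  by_cases h2 : i = j + 1
  · have : j + 1 ≠ j - 1 := fun h => hN (by linear_combination h)
    simp [h2, twist, this, volterraGen_add_one_mul_volterraGen, smul_smul, hξ]
  · have h3 : i ≠ j - 1 := fun h => h1 (by rw [h]; ring)
    have : twist j (single i 1) = 0 := by simp [twist, Ne.symm h2, Ne.symm h3]
    rw [this, zpow_zero, one_smul, volterraGen_mul_volterraGen_comm h1 h2]

theorem volterraGen_mul_volterraWord (j : ZMod N) (l : List (ZMod N)) :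
    volterraGen N ξ j * volterraWord N ξ l
      = ξ ^ twist j (wordDegree l) • (volterraWord N ξ l * volterraGen N ξ j) := by
  induction l with
  | nil => simp [twist]
  | cons i l ih =>
    rw [volterraWord_cons, ← mul_assoc, volterraGen_mul_volterraGen hN hξ, smul_mul_assoc,
      mul_assoc, ih, mul_smul_comm, smul_smul, ← zpow_add₀ hξ, ← twist_add, ← wordDegree_cons,
      mul_assoc]

theorem volterraWord_eq_zpow_smul_of_perm {l₁ l₂ : List (ZMod N)} (h : l₁.Perm l₂) :
    ∃ k : ℤ, volterraWord N ξ l₁ = ξ ^ k • volterraWord N ξ l₂ := by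
  induction h with
  | nil => exact ⟨0, by simp⟩
  | cons i _ ih =>
    obtain ⟨k, hk⟩ := ih
    exact ⟨k, by rw [volterraWord_cons, volterraWord_cons, hk, mul_smul_comm]⟩
  | swap i j l =>
    refine ⟨twist j (single i 1), ?_⟩
    simp only [volterraWord_cons, ← mul_assoc, volterraGen_mul_volterraGen hN hξ i j,
      smul_mul_assoc]
  | trans _ _ ih₁ ih₂ =>
    obtain ⟨k₁, hk₁⟩ := ih₁
    obtain ⟨k₂, hk₂⟩ := ih₂
    exact ⟨k₁ + k₂, by rw [hk₁, hk₂, smul_smul, zpow_add₀ hξ]⟩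

theorem volterraWord_eq_zpow_smul_volterraMonomial (l : List (ZMod N)) :
    ∃ k : ℤ, volterraWord N ξ l = ξ ^ k • volterraMonomial N ξ (wordDegree l) := by
  refine volterraWord_eq_zpow_smul_of_perm hN hξ (Multiset.coe_eq_coe.mp ?_)
  simp [wordDegree]

theorem span_range_volterraMonomial :
    Submodule.span ℂ (Set.range (volterraMonomial N ξ)) = ⊤ := by
  rw [eq_top_iff, ← span_range_volterraWord, Submodule.span_le]
  rintro _ ⟨l, rfl⟩
  obtain ⟨k, hk⟩ := volterraWord_eq_zpow_smul_volterraMonomial hN hξ l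
  rw [hk]
  exact Submodule.smul_mem _ _ (Submodule.subset_span ⟨_, rfl⟩)

theorem linearIndependent_volterraWord {ι : Type*} (w : ι → List (ZMod N))
    (hw : Function.Injective fun i => wordDegree (w i)) :
    LinearIndependent ℂ fun i => volterraWord N ξ (w i) := by
  choose m hm using fun i => weightedShiftRep_volterraWord (ξ := ξ) hN (w i) 0
  let ev := LinearMap.applyₗ (single 0 1) ∘ₗ (weightedShiftRep ξ hN).toLinearMap
  refine LinearIndependent.of_comp ev ?_
  have : ev ∘ (fun i => volterraWord N ξ (w i))
      = (fun i => Units.mk0 (ξ ^ m i) (pow_ne_zero _ hξ)) •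
          fun i => single (wordDegree (w i)) 1 := by
    funext i
    simp [ev, hm]
  rw [this]
  exact (Finsupp.basisSingleOne.linearIndependent.comp _ hw).units_smul _

theorem volterraGen_mul_volterraMonomial (j : ZMod N) (a : ZMod N →₀ ℕ) :
    volterraGen N ξ j * volterraMonomial N ξ a
      = ξ ^ twist j a • (volterraMonomial N ξ a * volterraGen N ξ j) := by
  rw [volterraMonomial, volterraGen_mul_volterraWord hN hξ, wordDegree_toList_toMultiset]

theorem center_le_span_volterraMonomial :
    Subalgebra.toSubmodule (Subalgebra.center ℂ (VolterraAlgebra N ξ))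
      ≤ Submodule.span ℂ (volterraMonomial N ξ '' {a | ∀ j, ξ ^ twist j a = 1}) := by
  intro z hz
  have hz' : z ∈ Submodule.span ℂ (Set.range (volterraMonomial N ξ)) := by
    rw [span_range_volterraMonomial hN hξ]; trivial
  obtain ⟨c, rfl⟩ := Finsupp.mem_span_range_iff_exists_finsupp.mp hz'
  suffices key : ∀ a ∈ c.support, ∀ j, ξ ^ twist j a = 1 from Submodule.sum_mem _
    fun a ha => Submodule.smul_mem _ _ (Submodule.subset_span ⟨a, key a ha, rfl⟩)
  intro a ha j
  have hli := linearIndependent_volterraWord hN hξ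
    (fun a => (Finsupp.toMultiset a).toList ++ [j]) (fun a b h => by
      simpa [wordDegree_toList_toMultiset] using h)
  have hsum : ∑ b ∈ c.support, (c b * (ξ ^ twist j b - 1)) •
      volterraWord N ξ ((Finsupp.toMultiset b).toList ++ [j]) = 0 := by
    calc _ = ∑ b ∈ c.support, (c b • (volterraGen N ξ j * volterraMonomial N ξ b)
          - c b • (volterraMonomial N ξ b * volterraGen N ξ j)) := by
          refine Finset.sum_congr rfl fun b _ => ?_
          rw [volterraGen_mul_volterraMonomial hN hξ, smul_smul, ← sub_smul, mul_sub_one,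
            volterraWord_append, volterraMonomial]
          simp
      _ = volterraGen N ξ j * c.sum (fun b r => r • volterraMonomial N ξ b)
          - c.sum (fun b r => r • volterraMonomial N ξ b) * volterraGen N ξ j := by
          simp only [Finsupp.sum, Finset.mul_sum, Finset.sum_mul, Finset.sum_sub_distrib,
            mul_smul_comm, smul_mul_assoc]
      _ = 0 := sub_eq_zero.mpr (Subalgebra.mem_center_iff (R := ℂ).mp hz _)
  have := linearIndependent_iff'.mp hli c.support _ hsum a ha
  exact sub_eq_zero.mp ((mul_eq_zero.mp this).resolve_left (mem_support_iff.mp ha))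

theorem volterraWord_mem_center {l : List (ZMod N)}
    (hl : ∀ j, ξ ^ twist j (wordDegree l) = 1) :
    volterraWord N ξ l ∈ Subalgebra.center ℂ (VolterraAlgebra N ξ) := by
  refine Subalgebra.mem_center_iff.mpr fun b => ?_
  have hb : b ∈ Algebra.adjoin ℂ (Set.range (volterraGen N ξ)) := by
    rw [adjoin_range_volterraGen]; trivial
  refine (Algebra.commute_of_mem_adjoin_of_forall_mem_commute hb ?_).symm.eq
  rintro _ ⟨j, rfl⟩
  rw [Commute, SemiconjBy, volterraGen_mul_volterraWord hN hξ, hl, one_smul]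

theorem volterraGen_pow_mem_center {n : ℕ} (hξn : ξ ^ n = 1) (i : ZMod N) :
    volterraGen N ξ i ^ n ∈ Subalgebra.center ℂ (VolterraAlgebra N ξ) := by
  rw [← volterraWord_replicate]
  refine volterraWord_mem_center hN hξ fun j => ?_
  rw [wordDegree_replicate, twist_single, zpow_mul, zpow_natCast, hξn, one_zpow]

theorem volterraWord_cycleWord_mem_center [NeZero N] :
    volterraWord N ξ (cycleWord N) ∈ Subalgebra.center ℂ (VolterraAlgebra N ξ) :=
  volterraWord_mem_center hN hξ fun j => by simp [twist, wordDegree_cycleWord_apply]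

variable {B : Subalgebra ℂ (VolterraAlgebra N ξ)}

theorem volterraMonomial_wordDegree_mem {l : List (ZMod N)} (hl : volterraWord N ξ l ∈ B) :
    volterraMonomial N ξ (wordDegree l) ∈ B := by
  obtain ⟨k, hk⟩ := volterraWord_eq_zpow_smul_volterraMonomial hN hξ l
  have := B.smul_mem (hk ▸ hl) (ξ ^ k)⁻¹
  rwa [smul_smul, inv_mul_cancel₀ (zpow_ne_zero k hξ), one_smul] at this

theorem volterraMonomial_add_mem {a b : ZMod N →₀ ℕ} (ha : volterraMonomial N ξ a ∈ B)
    (hb : volterraMonomial N ξ b ∈ B) : volterraMonomial N ξ (a + b) ∈ B := by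
  have := volterraMonomial_wordDegree_mem hN hξ
    (l := (toMultiset a).toList ++ (toMultiset b).toList)
    (by rw [volterraWord_append]; exact B.mul_mem ha hb)
  rwa [wordDegree_append, wordDegree_toList_toMultiset, wordDegree_toList_toMultiset] at this

theorem volterraMonomial_mem_of_mod_eq [NeZero N] {n : ℕ} (hpow : ∀ i, volterraGen N ξ i ^ n ∈ B)
    (hcycle : volterraWord N ξ (cycleWord N) ∈ B) {a : ZMod N →₀ ℕ}
    (ha : ∀ u, a u % n = a 0 % n) : volterraMonomial N ξ a ∈ B := by
  have hnsmul (b : ZMod N →₀ ℕ) : volterraMonomial N ξ (n • b) ∈ B := by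
    induction b using Finsupp.induction_linear with
    | zero => simp
    | add b c hb hc => rw [smul_add]; exact volterraMonomial_add_mem hN hξ hb hc
    | single i k =>
      have := volterraMonomial_wordDegree_mem hN hξ (l := List.replicate (n * k) i)
        (by rw [volterraWord_replicate, pow_mul]; exact pow_mem (hpow i) k)
      rwa [wordDegree_replicate, ← smul_eq_mul, ← Finsupp.smul_single] at this
  have hcycles (r : ℕ) : volterraMonomial N ξ (r • wordDegree (cycleWord N)) ∈ B := by
    induction r with
    | zero => simp
    | succ r ih =>
      rw [succ_nsmul]
      exact volterraMonomial_add_mem hN hξ ih (volterraMonomial_wordDegree_mem hN hξ hcycle)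
  have hdecomp :
      a = (a 0 % n) • wordDegree (cycleWord N) + n • a.mapRange (· / n) (Nat.zero_div n) := by
    ext u
    simp [wordDegree_cycleWord_apply, ← ha u, Nat.mod_add_div]
  rw [hdecomp]
  exact volterraMonomial_add_mem hN hξ (hcycles _) (hnsmul _)

end

end VolterraAlgebra

end

open VolterraAlgebra

/-- for odd `N > 2` and `ξ` a primitive `n`-th root of unity (`n ≥ 2`),
the center of the quantum Volterra algebra equals the unital `ℂ`-subalgebra generated
by `x_1ⁿ, …, x_Nⁿ` together with the (ordered) product `x_1 x_2 ⋯ x_N`. -/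
theorem volterra_center (N : ℕ) (hN : 2 < N) (hNodd : Odd N)
    (n : ℕ) (hn : 2 ≤ n) (ξ : ℂ) (hξ : IsPrimitiveRoot ξ n) :
    Subalgebra.center ℂ (VolterraAlgebra N ξ) =
      Algebra.adjoin ℂ
        ((Set.range fun i : ZMod N => volterraGen N ξ i ^ n) ∪
          {((List.range N).map fun i : ℕ =>
              volterraGen N ξ (((i + 1 : ℕ) : ZMod N))).prod}) := by
  have hN2 : (2 : ZMod N) ≠ 0 := by
    rw [← Nat.cast_ofNat, Ne, ZMod.natCast_eq_zero_iff]
    exact fun h => absurd (Nat.le_of_dvd two_pos h) (by omega)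
  have hξ0 : ξ ≠ 0 := hξ.ne_zero (by omega)
  have : NeZero N := ⟨by omega⟩
  have hP : ((List.range N).map fun i : ℕ => volterraGen N ξ ((i + 1 : ℕ) : ZMod N)).prod
      = volterraWord N ξ (cycleWord N) := by
    simp [volterraWord, cycleWord, List.map_map, Function.comp_def]
  rw [hP]
  apply le_antisymm
  · intro z hz
    refine (Subalgebra.mem_toSubmodule _).mp (Submodule.span_le.mpr ?_
      (center_le_span_volterraMonomial hN2 hξ0 hz))
    rintro _ ⟨a, ha, rfl⟩
    exact volterraMonomial_mem_of_mod_eq hN2 hξ0 (fun i => Algebra.subset_adjoin (.inl ⟨i, rfl⟩))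
      (Algebra.subset_adjoin (.inr rfl)) (mod_eq_of_forall_zpow_twist_eq_one hNodd hξ ha)
  · refine Algebra.adjoin_le ?_
    rintro _ (⟨i, rfl⟩ | rfl)
    · exact volterraGen_pow_mem_center hN2 hξ0 hξ.pow_eq_one i
    · exact volterraWord_cycleWord_mem_center hN2 hξ0
end
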